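/- arXiv:1809.08868 — 2 statements merged into one kernel-verified Lean document; each statement's English description precedes it below -/
import Mathlib

section
/- If f : ℕ+ → ℝ is such that its Bougaïef derivative Df = f * μ is of constant sign (say Df ≥ 0), then f has a Cesàro mean value: (1/x) Σ_{n ≤ x} f(n) → Σ_{m ≥ 1} Df(m)/m as x → ∞ (possibly +∞). -/
/-!
Write `g = f * μ ≥ 0`. Möbius inversion gives `(1/x) ∑_{n ≤ x} f n = ∑_{m ≤ x} g m ⌊x/m⌋ / x`.
Since `⌊x/m⌋ / x ≤ 1/m`, the average never exceeds `∑_m g m / m`; conversely, for every finite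
set `t` of indices the subsum over `t` is eventually a lower bound and tends termwise to
`∑_{m ∈ t} g m / m`. Working in `EReal` covers the case where `∑_m g m / m` diverges.
-/

open ArithmeticFunction Filter Finset Topology
open scoped ArithmeticFunction.Moebius

theorem EReal.coe_finset_sum {ι : Type*} (s : Finset ι) (a : ι → ℝ) :
    ((∑ i ∈ s, a i : ℝ) : EReal) = ∑ i ∈ s, (a i : EReal) :=
  map_sum (⟨⟨Real.toEReal, EReal.coe_zero⟩, EReal.coe_add⟩ : ℝ →+ EReal) a s

theorem EReal.summable_coe_of_nonneg {ι : Type*} {a : ι → ℝ} (ha : ∀ i, 0 ≤ a i) :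
    Summable (fun i => (a i : EReal)) := by
  -- addition on `EReal` is not continuous at `(⊥, ⊤)`; summability is transported from `ℝ≥0∞`
  convert (ENNReal.summable (f := fun i => ENNReal.ofReal (a i))).map
    (⟨⟨(↑), EReal.coe_ennreal_zero⟩, EReal.coe_ennreal_add⟩ : ENNReal →+ EReal)
    continuous_coe_ennreal_ereal with i
  simp [EReal.coe_ennreal_ofReal, ha i]

theorem tendsto_of_le_of_forall_tendsto_le {α β ι : Type*} [LinearOrder β] [TopologicalSpace β]
    [OrderTopology β] {l : Filter α} {L : Filter ι} [L.NeBot] {u : α → β} {v : ι → α → β}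
    {P : ι → β} {s : β} (hP : Tendsto P L (𝓝 s)) (hv : ∀ i, Tendsto (v i) l (𝓝 (P i)))
    (hvu : ∀ i, v i ≤ᶠ[l] u) (hu : ∀ᶠ x in l, u x ≤ s) : Tendsto u l (𝓝 s) := by
  refine tendsto_order.2 ⟨fun c hc => ?_, fun b hb => hu.mono fun x hx => hx.trans_lt hb⟩
  obtain ⟨i, hi⟩ := (hP.eventually (eventually_gt_nhds hc)).exists
  filter_upwards [(hv i).eventually (eventually_gt_nhds hi), hvu i] with x hcv hvx
  exact hcv.trans_le hvx

theorem natFloor_div_div_le {x : ℝ} (hx : 0 ≤ x) (m : ℕ) : (⌊x / m⌋₊ : ℝ) / x ≤ 1 / m := by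
  rcases hx.eq_or_lt with rfl | hx
  · simp
  rw [div_le_iff₀ hx, one_div_mul_eq_div]
  exact Nat.floor_le (by positivity)

theorem tendsto_natFloor_div_div_atTop (m : ℕ) :
    Tendsto (fun x : ℝ => (⌊x / m⌋₊ : ℝ) / x) atTop (𝓝 (1 / m)) := by
  rcases Nat.eq_zero_or_pos m with rfl | hm
  · simp
  have hm' : (0 : ℝ) < m := Nat.cast_pos.2 hm
  have h := (tendsto_nat_floor_div_atTop.comp (tendsto_id.atTop_div_const hm')).div_const (m : ℝ)
  refine h.congr fun x => ?_
  simp only [Function.comp_apply, id]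
  rw [div_div, div_mul_cancel₀ x hm'.ne']

theorem ArithmeticFunction.sum_Ioc_eq_sum_mul_moebius_mul_div {R : Type*} [Ring R]
    (f : ArithmeticFunction R) (N : ℕ) :
    ∑ n ∈ Ioc 0 N, f n =
      ∑ m ∈ Ioc 0 N, (f * (μ : ArithmeticFunction ℤ)) m * ((N / m : ℕ) : R) := by
  conv_lhs => rw [← mul_one f, ← coe_moebius_mul_coe_zeta, ← mul_assoc]
  exact sum_Ioc_mul_zeta_eq_sum _ N

theorem tendsto_sum_mul_natFloor_div_div_atTop {g : ℕ → ℝ} (hg : ∀ m, 0 ≤ g m) :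
    Tendsto (fun x : ℝ => ((∑ m ∈ Ioc 0 ⌊x⌋₊, g m * (⌊x / m⌋₊ / x) : ℝ) : EReal)) atTop
      (𝓝 (∑' m, ((g m / m : ℝ) : EReal))) := by
  have hterm_nonneg : ∀ {x : ℝ}, 0 ≤ x → ∀ m, 0 ≤ g m * (⌊x / m⌋₊ / x) := fun hx m =>
    mul_nonneg (hg m) (by positivity)
  have hsum := (EReal.summable_coe_of_nonneg fun m => div_nonneg (hg m) m.cast_nonneg).hasSum
  refine tendsto_of_le_of_forall_tendsto_le hsum
    (v := fun t (x : ℝ) => ((∑ m ∈ t, g m * (⌊x / m⌋₊ / x) : ℝ) : EReal))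
    (fun t => ?_) (fun t => ?_) ?_
  · have := (continuous_coe_real_ereal.tendsto _).comp
      (tendsto_finsetSum t fun m _ => (tendsto_natFloor_div_div_atTop m).const_mul (g m))
    simpa only [Function.comp_def, EReal.coe_finset_sum, mul_one_div] using this
  · filter_upwards [eventually_ge_atTop ((t.sup id : ℕ) : ℝ)] with x hx
    have hx0 : 0 ≤ x := (Nat.cast_nonneg _).trans hx
    refine EReal.coe_le_coe_iff.2 ?_
    -- the term `m = 0` vanishes because `⌊x / 0⌋₊ = 0`
    rw [← sum_erase t (a := 0) (by simp)]
    refine sum_le_sum_of_subset_of_nonneg (fun m hm => ?_) fun m _ _ => hterm_nonneg hx0 m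
    obtain ⟨hm0, hmt⟩ := mem_erase.1 hm
    exact mem_Ioc.2 ⟨Nat.pos_of_ne_zero hm0,
      Nat.le_floor ((Nat.cast_le.2 (le_sup (f := id) hmt)).trans hx)⟩
  · filter_upwards [eventually_ge_atTop 0] with x hx
    calc ((∑ m ∈ Ioc 0 ⌊x⌋₊, g m * (⌊x / m⌋₊ / x) : ℝ) : EReal)
        ≤ ((∑ m ∈ Ioc 0 ⌊x⌋₊, g m / m : ℝ) : EReal) := by
          refine EReal.coe_le_coe_iff.2 (sum_le_sum fun m _ => ?_)
          exact (mul_le_mul_of_nonneg_left (natFloor_div_div_le hx m) (hg m)).trans_eq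
            (mul_one_div _ _)
      _ ≤ _ := by
          rw [EReal.coe_finset_sum]
          exact sum_le_hasSum _
            (fun m _ => EReal.coe_nonneg.2 (div_nonneg (hg m) m.cast_nonneg)) hsum

open ArithmeticFunction in
/-- If the Bougaïef derivative `Df = f * μ` is nonnegative, then `f` has a Cesàro mean value
`∑_{m ≥ 1} Df(m)/m`, possibly `+∞`. -/
theorem stmt17 (f : ArithmeticFunction ℝ)
    (h : ∀ n : ℕ, 0 ≤ (f * (ArithmeticFunction.moebius : ArithmeticFunction ℤ)) n) :
    Filter.Tendsto
      (fun x : ℝ => (((∑ n ∈ Finset.Icc 1 ⌊x⌋₊, f n) / x : ℝ) : EReal))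
      Filter.atTop
      (nhds (∑' m : ℕ,
        (((f * (ArithmeticFunction.moebius : ArithmeticFunction ℤ)) m / m : ℝ) : EReal))) := by
  have hmean : ∀ x : ℝ, (∑ n ∈ Icc 1 ⌊x⌋₊, f n) / x = ∑ m ∈ Ioc 0 ⌊x⌋₊,
      (f * (μ : ArithmeticFunction ℤ)) m * (⌊x / m⌋₊ / x) := fun x => by
    rw [← zero_add 1, Icc_add_one_left_eq_Ioc, sum_Ioc_eq_sum_mul_moebius_mul_div, sum_div]
    simp only [Nat.floor_div_natCast, mul_div_assoc]
  simpa only [hmean] using tendsto_sum_mul_natFloor_div_div_atTop h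
end

section
/- Let c_0 : ℤ → ℂ with c_0(-i) = conj(c_0(i)), and suppose Δ_n = det(c_0(i-j))_{1 ≤ i,j ≤ n} > 0 for all n (with Δ_0 = 1). Then the sequence Δ_n/Δ_{n-1} is decreasing in n. -/
/-!
Apply the Desnanot–Jacobi identity to the Hermitian Toeplitz matrix `T = T_{n+2}`. Deleting the
first or the last row and column of `T` both leave `T_{n+1}`, deleting both leaves `T_n`, and the
two minors obtained by deleting the first row and last column or vice versa are complex
conjugates `q̄`, `q`. Hence `Δ_{n+2} Δ_n = Δ_{n+1}² - |q|² ≤ Δ_{n+1}²`, which is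
`Δ_{n+2} / Δ_{n+1} ≤ Δ_{n+1} / Δ_n` since all `Δ_k > 0`.
-/

open Matrix

namespace Fin

def ends (n : ℕ) : Fin 2 → Fin (n + 2) := ![0, last (n + 1)]

def interior (n : ℕ) : Fin n → Fin (n + 2) := fun i => i.castSucc.succ

@[simp] lemma ends_zero (n : ℕ) : ends n 0 = 0 := rfl
@[simp] lemma ends_one (n : ℕ) : ends n 1 = last (n + 1) := rfl
@[simp] lemma val_interior {n : ℕ} (i : Fin n) : (interior n i : ℕ) = i + 1 := rfl

lemma interior_ne_ends {n : ℕ} (i : Fin n) (j : Fin 2) : interior n i ≠ ends n j := by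
  fin_cases j <;> simp [Fin.ext_iff, i.isLt.ne]

lemma ends_injective (n : ℕ) : Function.Injective (ends n) := by
  intro i j h
  fin_cases i <;> fin_cases j <;> simp_all [Fin.ext_iff]

lemma interior_injective (n : ℕ) : Function.Injective (interior n) := by
  intro i j h
  simpa [Fin.ext_iff] using h

lemma interior_notMem_range_ends {n : ℕ} (i : Fin n) : interior n i ∉ Set.range (ends n) := by
  rintro ⟨j, h⟩
  exact interior_ne_ends i j h.symm

noncomputable def endsSumInteriorEquiv (n : ℕ) : Fin 2 ⊕ Fin n ≃ Fin (n + 2) :=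
  Equiv.ofBijective (Sum.elim (ends n) (interior n)) <| by
    rw [Fintype.bijective_iff_injective_and_card]
    refine ⟨?_, by simp [Nat.add_comm]⟩
    rintro (i | i) (j | j) h
    · exact congrArg _ (ends_injective n h)
    · exact absurd h.symm (interior_ne_ends j i)
    · exact absurd h (interior_ne_ends i j)
    · exact congrArg _ (interior_injective n h)

end Fin

namespace Matrix

section DesnanotJacobi

variable {R : Type*} [CommRing R] {n : ℕ}

theorem det_eq_det_ends_mul_det_interior (X : Matrix (Fin (n + 2)) (Fin (n + 2)) R)
    (h : ∀ i j, X (Fin.interior n i) (Fin.ends n j) = 0) :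
    X.det = (X.submatrix (Fin.ends n) (Fin.ends n)).det *
      (X.submatrix (Fin.interior n) (Fin.interior n)).det := by
  let e := Fin.endsSumInteriorEquiv n
  have h₂₁ : (X.submatrix e e).toBlocks₂₁ = 0 := by ext i j; exact h i j
  rw [← det_submatrix_equiv_self e X, ← fromBlocks_toBlocks (X.submatrix e e), h₂₁,
    det_fromBlocks_zero₂₁]
  rfl

theorem det_mul_det_submatrix_interior_eq_det_adjugate [IsDomain R]
    (M : Matrix (Fin (n + 2)) (Fin (n + 2)) R) (hM : M.det ≠ 0) :
    M.det * (M.submatrix (Fin.interior n) (Fin.interior n)).det =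
      (M.adjugate.submatrix (Fin.ends n) (Fin.ends n)).det := by
  -- `M * N` has the end columns of `M.det • 1` and the interior columns of `M`, so both `M * N`
  -- and `N` are block triangular with respect to the ends/interior splitting.
  set N : Matrix (Fin (n + 2)) (Fin (n + 2)) R :=
    of fun i j => if j ∈ Set.range (Fin.ends n) then M.adjugate i j else (1 : Matrix _ _ R) i j
  have hMN : ∀ i j, (M * N) i j =
      if j ∈ Set.range (Fin.ends n) then (M * M.adjugate) i j else M i j := by
    intro i j
    split_ifs with hj
    · simp only [mul_apply, N, of_apply, if_pos hj]
    · simp only [mul_apply, N, of_apply, if_neg hj]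
      rw [← mul_apply, Matrix.mul_one]
  rw [mul_adjugate] at hMN
  have hdetMN :
      (M * N).det = M.det * M.det * (M.submatrix (Fin.interior n) (Fin.interior n)).det := by
    have hends : (M * N).submatrix (Fin.ends n) (Fin.ends n) = M.det • 1 := by
      ext i j
      rw [submatrix_apply, hMN, if_pos ⟨j, rfl⟩]
      simp [one_apply, (Fin.ends_injective n).eq_iff]
    have hinterior : (M * N).submatrix (Fin.interior n) (Fin.interior n) =
        M.submatrix (Fin.interior n) (Fin.interior n) := by
      ext i j
      exact (hMN _ _).trans (if_neg (Fin.interior_notMem_range_ends j))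
    rw [det_eq_det_ends_mul_det_interior, hends, hinterior, det_smul, det_one, Fintype.card_fin]
    · ring
    · intro i j
      rw [hMN, if_pos ⟨j, rfl⟩, smul_apply, one_apply_ne (Fin.interior_ne_ends i j), smul_zero]
  have hdetN : N.det = (M.adjugate.submatrix (Fin.ends n) (Fin.ends n)).det := by
    rw [← det_transpose, det_eq_det_ends_mul_det_interior]
    · have hends : N.submatrix (Fin.ends n) (Fin.ends n) =
          M.adjugate.submatrix (Fin.ends n) (Fin.ends n) := by
        ext i j
        exact if_pos ⟨j, rfl⟩
      have hinterior : N.submatrix (Fin.interior n) (Fin.interior n) = 1 := by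
        refine Eq.trans ?_ (submatrix_one _ (Fin.interior_injective n))
        ext i j
        exact if_neg (Fin.interior_notMem_range_ends j)
      rw [← transpose_submatrix, det_transpose, hends, ← transpose_submatrix, hinterior,
        transpose_one, det_one, mul_one]
    · intro i j
      simp only [transpose_apply, N, of_apply, if_neg (Fin.interior_notMem_range_ends i)]
      exact one_apply_ne (Fin.interior_ne_ends i j).symm
  apply mul_left_cancel₀ hM
  rw [← hdetN, ← det_mul, hdetMN, mul_assoc]

theorem det_adjugate_submatrix_ends (M : Matrix (Fin (n + 2)) (Fin (n + 2)) R) :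
    (M.adjugate.submatrix (Fin.ends n) (Fin.ends n)).det =
      (M.submatrix Fin.succ Fin.succ).det * (M.submatrix Fin.castSucc Fin.castSucc).det -
        (M.submatrix Fin.castSucc Fin.succ).det * (M.submatrix Fin.succ Fin.castSucc).det := by
  simp only [det_fin_two, submatrix_apply, Fin.ends_zero, Fin.ends_one,
    adjugate_fin_succ_eq_det_submatrix, Fin.succAbove_zero, Fin.succAbove_last, Fin.val_zero,
    Fin.val_last, add_zero, zero_add, pow_zero, one_mul]
  rw [mul_mul_mul_comm, ← pow_add, Even.neg_one_pow ⟨n + 1, rfl⟩, one_mul, one_mul]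

/-- The Desnanot–Jacobi identity. -/
theorem det_mul_det_submatrix_interior [IsDomain R] (M : Matrix (Fin (n + 2)) (Fin (n + 2)) R)
    (hM : M.det ≠ 0) :
    M.det * (M.submatrix (Fin.interior n) (Fin.interior n)).det =
      (M.submatrix Fin.succ Fin.succ).det * (M.submatrix Fin.castSucc Fin.castSucc).det -
        (M.submatrix Fin.castSucc Fin.succ).det * (M.submatrix Fin.succ Fin.castSucc).det := by
  rw [det_mul_det_submatrix_interior_eq_det_adjugate M hM, det_adjugate_submatrix_ends]

end DesnanotJacobi

def toeplitz {R : Type*} (c : ℤ → R) (n : ℕ) : Matrix (Fin n) (Fin n) R :=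
  of fun i j : Fin n => c ((i : ℤ) - (j : ℤ))

section Toeplitz

variable {R : Type*} (c : ℤ → R) (n : ℕ)

theorem toeplitz_submatrix_of_sub {m : ℕ} (f g : Fin n → Fin m)
    (h : ∀ i j, ((f i : ℕ) : ℤ) - (g j : ℕ) = (i : ℤ) - (j : ℤ)) :
    (toeplitz c m).submatrix f g = toeplitz c n := by
  ext i j
  simp only [toeplitz, submatrix_apply, of_apply, h]

theorem toeplitz_submatrix_interior :
    (toeplitz c (n + 2)).submatrix (Fin.interior n) (Fin.interior n) = toeplitz c n :=
  toeplitz_submatrix_of_sub c n _ _ fun _ _ => by simp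

theorem toeplitz_submatrix_succ :
    (toeplitz c (n + 1)).submatrix Fin.succ Fin.succ = toeplitz c n :=
  toeplitz_submatrix_of_sub c n _ _ fun _ _ => by simp

theorem toeplitz_submatrix_castSucc :
    (toeplitz c (n + 1)).submatrix Fin.castSucc Fin.castSucc = toeplitz c n :=
  toeplitz_submatrix_of_sub c n _ _ fun _ _ => rfl

theorem toeplitz_conjTranspose [Star R] (hc : ∀ i, c (-i) = star (c i)) :
    (toeplitz c n)ᴴ = toeplitz c n := by
  ext i j
  rw [conjTranspose_apply, toeplitz, of_apply, of_apply, ← hc, neg_sub]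

theorem det_toeplitz_mul_det_toeplitz [CommRing R] [IsDomain R] [StarRing R]
    (hc : ∀ i, c (-i) = star (c i)) (h : (toeplitz c (n + 2)).det ≠ 0) :
    (toeplitz c (n + 2)).det * (toeplitz c n).det =
      (toeplitz c (n + 1)).det ^ 2 -
        star ((toeplitz c (n + 2)).submatrix Fin.succ Fin.castSucc).det *
          ((toeplitz c (n + 2)).submatrix Fin.succ Fin.castSucc).det := by
  have hcorner : (toeplitz c (n + 2)).submatrix Fin.castSucc Fin.succ =
      ((toeplitz c (n + 2)).submatrix Fin.succ Fin.castSucc)ᴴ := by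
    rw [conjTranspose_submatrix, toeplitz_conjTranspose c _ hc]
  rw [← toeplitz_submatrix_interior c n, det_mul_det_submatrix_interior _ h,
    toeplitz_submatrix_succ, toeplitz_submatrix_castSucc, hcorner, det_conjTranspose, sq]

theorem det_toeplitz_mul_det_toeplitz_le [CommRing R] [IsDomain R] [StarRing R] [PartialOrder R]
    [StarOrderedRing R] (hc : ∀ i, c (-i) = star (c i)) (h : (toeplitz c (n + 2)).det ≠ 0) :
    (toeplitz c (n + 2)).det * (toeplitz c n).det ≤ (toeplitz c (n + 1)).det ^ 2 := by
  rw [det_toeplitz_mul_det_toeplitz c n hc h]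
  exact sub_le_self _ (star_mul_self_nonneg _)

end Toeplitz

end Matrix

theorem stmt19_general (c₀ : ℤ → ℂ) (hc : ∀ i : ℤ, c₀ (-i) = starRingEnd ℂ (c₀ i))
    (Δ : ℕ → ℝ)
    (hΔ : ∀ n : ℕ, (Δ n : ℂ) =
      Matrix.det (Matrix.of fun i j : Fin n => c₀ ((i : ℤ) - (j : ℤ))))
    (hpos : ∀ n : ℕ, 0 < Δ n) :
    Antitone (fun n : ℕ => Δ (n + 1) / Δ n) := by
  have hΔT : ∀ n, (Δ n : ℂ) = (toeplitz c₀ n).det := hΔ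
  refine antitone_nat_of_succ_le fun n => ?_
  have key : Δ (n + 2) * Δ n ≤ Δ (n + 1) ^ 2 := by
    open scoped ComplexOrder in
    have h := det_toeplitz_mul_det_toeplitz_le c₀ n hc
      (by rw [← hΔT]; exact_mod_cast (hpos (n + 2)).ne')
    rw [← hΔT, ← hΔT, ← hΔT] at h
    exact_mod_cast h
  rw [div_le_div_iff₀ (hpos _) (hpos _)]
  linarith

/-- Fekete's theorem: for positive hermitian Toeplitz determinants `Δ n`, the sequence
`Δ (n+1) / Δ n` is decreasing. -/
theorem stmt19 (c₀ : ℤ → ℂ) (hc : ∀ i : ℤ, c₀ (-i) = starRingEnd ℂ (c₀ i))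
    (Δ : ℕ → ℝ) (hΔ0 : Δ 0 = 1)
    (hΔ : ∀ n : ℕ, (Δ n : ℂ) =
      Matrix.det (Matrix.of fun i j : Fin n => c₀ ((i : ℤ) - (j : ℤ))))
    (hpos : ∀ n : ℕ, 0 < Δ n) :
    Antitone (fun n : ℕ => Δ (n + 1) / Δ n) :=
  stmt19_general c₀ hc Δ hΔ hpos
end
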